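/- Under the discrete-time hypergraph heat diffusion x_{t+1} = x_t − D⁻¹L^D(x_t), the iterates satisfy ‖x_t − π(x₀)‖_D² ≤ (1 − λ_G)^t ‖x₀ − π(x₀)‖_D², where λ_G is the Poincaré constant of the hypergraph. -/

import Mathlib

open Finset

/-- `min_{u ∈ ℝ} N(x − u·1)`, the shift-minimized hyperedge norm. -/
noncomputable def edgeMin {V : Type*} (N : (V → ℝ) → ℝ) (x : V → ℝ) : ℝ :=
  sInf (Set.range fun u : ℝ => N (fun i => x i - u))

/-- The hypergraph potential `U(x) = (1/2) Σ_h w_h (min_u ‖x_h − u·1_h‖_h)²`. -/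
noncomputable def hU {V E : Type*} [Fintype E] (w : E → ℝ)
    (N : E → (V → ℝ) → ℝ) (x : V → ℝ) : ℝ :=
  (1 / 2) * ∑ e, w e * (edgeMin (N e) x) ^ 2

/-- The degree `deg(i) = Σ_{h ∋ i} w_h`. -/
noncomputable def hdeg {V E : Type*} [Fintype E] [DecidableEq V]
    (edge : E → Finset V) (w : E → ℝ) (i : V) : ℝ :=
  ∑ e, if i ∈ edge e then w e else 0

/-- The subdifferential of `f` at `x` (Euclidean inner product). -/
def subdiff {V : Type*} [Fintype V] (f : (V → ℝ) → ℝ) (x : V → ℝ) :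
    Set (V → ℝ) :=
  {z | ∀ w, f x + ∑ i, (w i - x i) * z i ≤ f w}

section Aux

variable {V : Type*}

lemma edgeMin_nonneg (N : (V → ℝ) → ℝ) (hN0 : ∀ y, 0 ≤ N y) (x : V → ℝ) :
    0 ≤ edgeMin N x :=
  Real.sInf_nonneg (by rintro t ⟨u, rfl⟩; exact hN0 _)

lemma edgeMin_bddBelow (N : (V → ℝ) → ℝ) (hN0 : ∀ y, 0 ≤ N y) (x : V → ℝ) :
    BddBelow (Set.range fun u : ℝ => N (fun i => x i - u)) :=
  ⟨0, by rintro t ⟨u, rfl⟩; exact hN0 _⟩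

lemma edgeMin_le (N : (V → ℝ) → ℝ) (hN0 : ∀ y, 0 ≤ N y) (x : V → ℝ) (u : ℝ) :
    edgeMin N x ≤ N (fun i => x i - u) :=
  csInf_le (edgeMin_bddBelow N hN0 x) ⟨u, rfl⟩

lemma le_edgeMin (N : (V → ℝ) → ℝ) (x : V → ℝ) (c : ℝ)
    (h : ∀ u : ℝ, c ≤ N (fun i => x i - u)) : c ≤ edgeMin N x :=
  le_csInf (Set.range_nonempty _) (by rintro t ⟨u, rfl⟩; exact h u)

lemma edgeMin_shift (N : (V → ℝ) → ℝ) (x : V → ℝ) (s : ℝ) :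
    edgeMin N (fun i => x i + s) = edgeMin N x := by
  unfold edgeMin
  congr 1
  ext t
  constructor
  · rintro ⟨u, rfl⟩
    refine ⟨u - s, ?_⟩
    show N (fun i => x i - (u - s)) = N (fun i => (x i + s) - u)
    congr 1; funext i; ring
  · rintro ⟨u, rfl⟩
    refine ⟨u + s, ?_⟩
    show N (fun i => (x i + s) - (u + s)) = N (fun i => x i - u)
    congr 1; funext i; ring

lemma edgeMin_smul (N : (V → ℝ) → ℝ)
    (hNsmul : ∀ (a : ℝ) (y : V → ℝ), N (a • y) = |a| * N y)
    (x : V → ℝ) {a : ℝ} (ha : 0 < a) :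
    edgeMin N (fun i => a * x i) = a * edgeMin N x := by
  unfold edgeMin
  rw [← smul_eq_mul, ← Real.sInf_smul_of_nonneg ha.le]
  congr 1
  ext t
  simp only [Set.mem_smul_set, Set.mem_range]
  constructor
  · rintro ⟨u, rfl⟩
    refine ⟨N (fun i => x i - u / a), ⟨u / a, rfl⟩, ?_⟩
    have h1 : (fun i => a * x i - u) = a • (fun i => x i - u / a) := by
      funext i
      simp only [Pi.smul_apply, smul_eq_mul]
      field_simp
    rw [h1, hNsmul, abs_of_pos ha, smul_eq_mul]
  · rintro ⟨t, ⟨u, rfl⟩, rfl⟩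
    refine ⟨a * u, ?_⟩
    have h1 : (fun i => a * x i - a * u) = a • (fun i => x i - u) := by
      funext i; simp only [Pi.smul_apply, smul_eq_mul]; ring
    rw [h1, hNsmul, abs_of_pos ha, smul_eq_mul]

lemma edgeMin_add [Fintype V] (N : (V → ℝ) → ℝ) (hN0 : ∀ y, 0 ≤ N y)
    (hNadd : ∀ y y', N (y + y') ≤ N y + N y') (x y : V → ℝ) :
    edgeMin N (x + y) ≤ edgeMin N x + edgeMin N y := by
  have hkey : ∀ u u' : ℝ,
      edgeMin N (x + y) ≤ N (fun i => x i - u) + N (fun i => y i - u') := by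
    intro u u'
    have h1 : edgeMin N (x + y) ≤ N (fun i => (x + y) i - (u + u')) :=
      edgeMin_le N hN0 (x + y) (u + u')
    have h2 : (fun i => (x + y) i - (u + u'))
        = (fun i => x i - u) + (fun i => y i - u') := by
      funext i; simp [Pi.add_apply]; ring
    rw [h2] at h1
    exact h1.trans (hNadd _ _)
  have h2 : ∀ u : ℝ, edgeMin N (x + y) - N (fun i => x i - u) ≤ edgeMin N y := by
    intro u
    apply le_edgeMin
    intro u'
    linarith [hkey u u']
  have h3 : edgeMin N (x + y) - edgeMin N y ≤ edgeMin N x := by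
    apply le_edgeMin
    intro u
    linarith [h2 u]
  linarith

end Aux

section AuxU

variable {V E : Type*} [Fintype V] [Fintype E]

lemma hU_nonneg (w : E → ℝ) (N : E → (V → ℝ) → ℝ) (hw : ∀ e, 0 ≤ w e)
    (x : V → ℝ) : 0 ≤ hU w N x := by
  unfold hU
  apply mul_nonneg (by norm_num)
  exact Finset.sum_nonneg fun e _ => mul_nonneg (hw e) (sq_nonneg _)

lemma hU_shift (w : E → ℝ) (N : E → (V → ℝ) → ℝ) (x : V → ℝ) (s : ℝ) :
    hU w N (fun i => x i + s) = hU w N x := by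
  unfold hU
  congr 1
  apply Finset.sum_congr rfl
  intro e _
  rw [edgeMin_shift]

lemma hU_smul (w : E → ℝ) (N : E → (V → ℝ) → ℝ)
    (hNsmul : ∀ e (a : ℝ) (y : V → ℝ), N e (a • y) = |a| * N e y)
    (x : V → ℝ) {a : ℝ} (ha : 0 < a) :
    hU w N (fun i => a * x i) = a ^ 2 * hU w N x := by
  unfold hU
  have h : ∀ e ∈ (univ : Finset E),
      w e * (edgeMin (N e) (fun i => a * x i)) ^ 2
        = a ^ 2 * (w e * (edgeMin (N e) x) ^ 2) := by
    intro e _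
    rw [edgeMin_smul (N e) (hNsmul e) x ha]
    ring
  rw [Finset.sum_congr rfl h, ← Finset.mul_sum]
  ring

end AuxU

/-- Existence of a "subgradient vector" for a single edge seminorm, supported on
the edge and with Euclidean norm at most 1. -/
lemma exists_edge_grad {V : Type*} [Fintype V] [DecidableEq V] (edge : Finset V)
    (N : (V → ℝ) → ℝ) (hN0 : ∀ y, 0 ≤ N y)
    (hNadd : ∀ y y', N (y + y') ≤ N y + N y')
    (hNsmul : ∀ (a : ℝ) (y : V → ℝ), N (a • y) = |a| * N y)
    (hNloc : ∀ y y', (∀ i ∈ edge, y i = y' i) → N y = N y')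
    (hNle : ∀ y, N y ≤ Real.sqrt (∑ i ∈ edge, (y i) ^ 2))
    (x : V → ℝ) :
    ∃ γ : V → ℝ, (∀ y : V → ℝ, ∑ i, y i * γ i ≤ edgeMin N y) ∧
      (edgeMin N x ≤ ∑ i, x i * γ i) ∧ (∀ i ∉ edge, γ i = 0) ∧
      (∑ i, (γ i) ^ 2 ≤ 1) := by
  have hzero : N (fun _ => (0 : ℝ)) = 0 := by
    have h := hNsmul 0 (fun _ => 0)
    simp at h
    exact h
  have hvanish : ∀ f : V → ℝ, (∀ j ∈ edge, f j = 0) → edgeMin N f ≤ 0 := by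
    intro f hf
    have h1 := edgeMin_le N hN0 f 0
    have h2 : N (fun j => f j - 0) = N (fun _ => 0) := by
      apply hNloc
      intro j hj
      simp [hf j hj]
    rw [h2, hzero] at h1
    exact h1
  by_cases hx : x = 0
  · subst hx
    refine ⟨fun _ => 0, ?_, ?_, ?_, ?_⟩
    · intro y
      simpa using edgeMin_nonneg N hN0 y
    · have h1 : edgeMin N (0 : V → ℝ) ≤ 0 := hvanish 0 (fun j _ => rfl)
      simpa using h1
    · intro i _; rfl
    · simp
  · have phom : ∀ c : ℝ, 0 < c → ∀ y : V → ℝ,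
        edgeMin N (c • y) = c * edgeMin N y := by
      intro c hc y
      have hy : c • y = fun i => c * y i := by funext i; simp
      rw [hy]
      exact edgeMin_smul N hNsmul y hc
    obtain ⟨g, hg1, hg2⟩ := exists_extension_of_le_sublinear
      (LinearPMap.mkSpanSingleton x (edgeMin N x) hx) (edgeMin N)
      phom (edgeMin_add N hN0 hNadd)
      (by
        rintro ⟨v, hv⟩
        obtain ⟨a, rfl⟩ := Submodule.mem_span_singleton.mp hv
        have happ : (LinearPMap.mkSpanSingleton x (edgeMin N x) hx) ⟨a • x, hv⟩
            = a • edgeMin N x :=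
          LinearPMap.mkSpanSingleton'_apply x (edgeMin N x) _ a hv
        rw [happ]
        show a • edgeMin N x ≤ edgeMin N (a • x)
        rcases le_or_gt a 0 with hle | hlt
        · have h1 : a • edgeMin N x ≤ 0 := by
            rw [smul_eq_mul]
            exact mul_nonpos_iff.mpr (Or.inr ⟨hle, edgeMin_nonneg N hN0 x⟩)
          exact h1.trans (edgeMin_nonneg N hN0 _)
        · rw [smul_eq_mul, ← phom a hlt x])
    have hgx : g x = edgeMin N x := by
      have h := hg1 ⟨x, Submodule.mem_span_singleton_self x⟩
      rw [LinearPMap.mkSpanSingleton_apply ℝ ℝ hx (edgeMin N x)] at h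
      exact h
    set γ : V → ℝ := fun i => g (fun j => if i = j then 1 else 0) with hγ
    have hrep : ∀ y : V → ℝ, g y = ∑ i, y i * γ i := by
      intro y
      rw [LinearMap.pi_apply_eq_sum_univ g y]
      simp only [smul_eq_mul, hγ]
    have hsupp : ∀ i ∉ edge, γ i = 0 := by
      intro i hi
      have hδ : ∀ j ∈ edge, (fun j => if i = j then (1 : ℝ) else 0) j = 0 := by
        intro j hj
        simp [show i ≠ j from fun h => hi (h ▸ hj)]
      have hδ' : ∀ j ∈ edge, (fun j => -(if i = j then (1 : ℝ) else 0)) j = 0 := by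
        intro j hj
        simp only [hδ j hj, neg_zero]
      have ha : γ i ≤ 0 := le_trans (hg2 _) (hvanish _ hδ)
      have hb : -γ i ≤ 0 := by
        have h1 := le_trans (hg2 (fun j => -(if i = j then (1 : ℝ) else 0)))
          (hvanish _ hδ')
        have h2 : (fun j => -(if i = j then (1 : ℝ) else 0))
            = -(fun j => if i = j then (1 : ℝ) else 0) := rfl
        rw [h2, map_neg] at h1
        exact h1
      linarith
    have hsq : ∑ i, (γ i) ^ 2 ≤ 1 := by
      have ht0 : (0 : ℝ) ≤ ∑ i, (γ i) ^ 2 :=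
        Finset.sum_nonneg fun i _ => sq_nonneg _
      have h1 : g γ = ∑ i, (γ i) ^ 2 := by
        rw [hrep γ]
        apply Finset.sum_congr rfl
        intro i _; ring
      have h3 : N (fun j => γ j - 0) = N γ := by congr 1; funext j; ring
      have h5 : ∑ i ∈ edge, (γ i) ^ 2 ≤ ∑ i, (γ i) ^ 2 :=
        Finset.sum_le_sum_of_subset_of_nonneg (Finset.subset_univ _)
          (fun i _ _ => sq_nonneg _)
      have h7 : ∑ i, (γ i) ^ 2 ≤ Real.sqrt (∑ i, (γ i) ^ 2) := by
        calc ∑ i, (γ i) ^ 2 = g γ := h1.symm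
          _ ≤ edgeMin N γ := hg2 γ
          _ ≤ N (fun j => γ j - 0) := edgeMin_le N hN0 γ 0
          _ = N γ := h3
          _ ≤ Real.sqrt (∑ i ∈ edge, (γ i) ^ 2) := hNle γ
          _ ≤ Real.sqrt (∑ i, (γ i) ^ 2) := Real.sqrt_le_sqrt h5
      nlinarith [Real.sq_sqrt ht0, Real.sqrt_nonneg (∑ i, (γ i) ^ 2)]
    refine ⟨γ, ?_, ?_, hsupp, hsq⟩
    · intro y
      rw [← hrep y]
      exact hg2 y
    · rw [← hrep x, hgx]

/-- Existence of a subgradient of `hU` whose `D⁻¹`-norm squared is at most `2 U(x)`. -/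
lemma exists_good_subgrad {V E : Type*} [Fintype V] [Fintype E] [DecidableEq V]
    (edge : E → Finset V) (w : E → ℝ) (N : E → (V → ℝ) → ℝ)
    (hw : ∀ e, 0 ≤ w e) (hN0 : ∀ e y, 0 ≤ N e y)
    (hNadd : ∀ e (y y' : V → ℝ), N e (y + y') ≤ N e y + N e y')
    (hNsmul : ∀ e (a : ℝ) (y : V → ℝ), N e (a • y) = |a| * N e y)
    (hNloc : ∀ e (y y' : V → ℝ), (∀ i ∈ edge e, y i = y' i) → N e y = N e y')
    (hNle : ∀ e (y : V → ℝ), N e y ≤ Real.sqrt (∑ i ∈ edge e, (y i) ^ 2))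
    (hdpos : ∀ i, 0 < hdeg edge w i) (x : V → ℝ) :
    ∃ z' ∈ subdiff (hU w N) x,
      ∑ i, (z' i) ^ 2 / hdeg edge w i ≤ 2 * hU w N x := by
  choose γ hγ1 hγ2 hγ3 hγ4 using fun e =>
    exists_edge_grad (edge e) (N e) (hN0 e) (hNadd e) (hNsmul e) (hNloc e) (hNle e) x
  refine ⟨fun i => ∑ e, w e * edgeMin (N e) x * γ e i, ?_, ?_⟩
  · intro y
    have hswap : ∑ i, (y i - x i) * ∑ e, w e * edgeMin (N e) x * γ e i
        = ∑ e, w e * edgeMin (N e) x * (∑ i, (y i - x i) * γ e i) := by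
      simp_rw [Finset.mul_sum]
      rw [Finset.sum_comm]
      apply Finset.sum_congr rfl; intro e _
      apply Finset.sum_congr rfl; intro i _; ring
    have hterm : ∀ e ∈ (univ : Finset E),
        w e * edgeMin (N e) x * (∑ i, (y i - x i) * γ e i)
          ≤ w e * ((edgeMin (N e) y) ^ 2 / 2 - (edgeMin (N e) x) ^ 2 / 2) := by
      intro e _
      have hS : ∑ i, (y i - x i) * γ e i ≤ edgeMin (N e) y - edgeMin (N e) x := by
        have h1 : ∑ i, (y i - x i) * γ e i
            = (∑ i, y i * γ e i) - ∑ i, x i * γ e i := by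
          rw [← Finset.sum_sub_distrib]
          apply Finset.sum_congr rfl; intro i _; ring
        rw [h1]
        linarith [hγ1 e y, hγ2 e]
      have hp0 : 0 ≤ edgeMin (N e) x := edgeMin_nonneg (N e) (hN0 e) x
      have hwp : 0 ≤ w e * edgeMin (N e) x := mul_nonneg (hw e) hp0
      nlinarith [mul_le_mul_of_nonneg_left hS hwp,
        mul_nonneg (hw e) (sq_nonneg (edgeMin (N e) y - edgeMin (N e) x))]
    have hsum := Finset.sum_le_sum hterm
    have hUeq : ∑ e, w e * ((edgeMin (N e) y) ^ 2 / 2 - (edgeMin (N e) x) ^ 2 / 2)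
        = hU w N y - hU w N x := by
      unfold hU
      rw [Finset.mul_sum, Finset.mul_sum, ← Finset.sum_sub_distrib]
      apply Finset.sum_congr rfl; intro e _; ring
    rw [hUeq] at hsum
    show hU w N x + ∑ i, (y i - x i) * ∑ e, w e * edgeMin (N e) x * γ e i ≤ hU w N y
    rw [hswap]
    linarith
  · have hi : ∀ i ∈ (univ : Finset V),
        (∑ e, w e * edgeMin (N e) x * γ e i) ^ 2 / hdeg edge w i
          ≤ ∑ e, w e * (edgeMin (N e) x) ^ 2 * (γ e i) ^ 2 := by
      intro i _
      have hcs := Finset.sum_mul_sq_le_sq_mul_sq Finset.univ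
        (fun e => if i ∈ edge e then Real.sqrt (w e) else 0)
        (fun e => Real.sqrt (w e) * edgeMin (N e) x * γ e i)
      have he1 : ∑ e, (if i ∈ edge e then Real.sqrt (w e) else 0)
            * (Real.sqrt (w e) * edgeMin (N e) x * γ e i)
          = ∑ e, w e * edgeMin (N e) x * γ e i := by
        apply Finset.sum_congr rfl; intro e _
        by_cases hie : i ∈ edge e
        · simp only [if_pos hie]
          rw [show Real.sqrt (w e) * (Real.sqrt (w e) * edgeMin (N e) x * γ e i)
              = (Real.sqrt (w e) * Real.sqrt (w e)) * (edgeMin (N e) x * γ e i) by ring,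
            Real.mul_self_sqrt (hw e)]
          ring
        · simp only [if_neg hie, zero_mul]
          rw [hγ3 e i hie]
          ring
      have he2 : ∑ e, (if i ∈ edge e then Real.sqrt (w e) else 0) ^ 2
          = hdeg edge w i := by
        unfold hdeg
        apply Finset.sum_congr rfl; intro e _
        by_cases hie : i ∈ edge e
        · simp [hie, Real.sq_sqrt (hw e)]
        · simp [hie]
      have he3 : ∑ e, (Real.sqrt (w e) * edgeMin (N e) x * γ e i) ^ 2
          = ∑ e, w e * (edgeMin (N e) x) ^ 2 * (γ e i) ^ 2 := by
        apply Finset.sum_congr rfl; intro e _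
        rw [mul_pow, mul_pow, Real.sq_sqrt (hw e)]
      rw [he1, he2, he3] at hcs
      rw [div_le_iff₀ (hdpos i)]
      exact hcs.trans_eq (mul_comm _ _)
    have hsum := Finset.sum_le_sum hi
    have hswap2 : ∑ i, ∑ e, w e * (edgeMin (N e) x) ^ 2 * (γ e i) ^ 2
        = ∑ e, w e * (edgeMin (N e) x) ^ 2 * ∑ i, (γ e i) ^ 2 := by
      rw [Finset.sum_comm]
      apply Finset.sum_congr rfl; intro e _
      rw [Finset.mul_sum]
    have hbound : ∑ e, w e * (edgeMin (N e) x) ^ 2 * ∑ i, (γ e i) ^ 2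
        ≤ ∑ e, w e * (edgeMin (N e) x) ^ 2 := by
      apply Finset.sum_le_sum
      intro e _
      have h1 : 0 ≤ w e * (edgeMin (N e) x) ^ 2 := mul_nonneg (hw e) (sq_nonneg _)
      calc w e * (edgeMin (N e) x) ^ 2 * ∑ i, (γ e i) ^ 2
          ≤ w e * (edgeMin (N e) x) ^ 2 * 1 :=
            mul_le_mul_of_nonneg_left (hγ4 e) h1
        _ = w e * (edgeMin (N e) x) ^ 2 := mul_one _
    have hUeq2 : 2 * hU w N x = ∑ e, w e * (edgeMin (N e) x) ^ 2 := by
      unfold hU; ring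
    rw [hUeq2]
    calc ∑ i, (∑ e, w e * edgeMin (N e) x * γ e i) ^ 2 / hdeg edge w i
        ≤ ∑ i, ∑ e, w e * (edgeMin (N e) x) ^ 2 * (γ e i) ^ 2 := hsum
      _ = ∑ e, w e * (edgeMin (N e) x) ^ 2 * ∑ i, (γ e i) ^ 2 := hswap2
      _ ≤ ∑ e, w e * (edgeMin (N e) x) ^ 2 := hbound

/-- Any subgradient `z` of `hU` at `x` sums to zero. -/
lemma subgrad_sum_zero {V E : Type*} [Fintype V] [Fintype E]
    (w : E → ℝ) (N : E → (V → ℝ) → ℝ) (x z : V → ℝ)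
    (hz : z ∈ subdiff (hU w N) x) : ∑ i, z i = 0 := by
  have h1 := hz (fun i => x i + 1)
  have h2 := hz (fun i => x i + (-1))
  rw [hU_shift w N x 1] at h1
  rw [hU_shift w N x (-1)] at h2
  have e1 : ∑ i, ((x i + 1) - x i) * z i = ∑ i, z i := by
    apply Finset.sum_congr rfl; intro i _; ring
  have e2 : ∑ i, ((x i + (-1)) - x i) * z i = ∑ i, -(z i) := by
    apply Finset.sum_congr rfl; intro i _; ring
  rw [e1] at h1
  rw [e2, Finset.sum_neg_distrib] at h2
  linarith

/-- Euler-type inequality: `2 U(x) ≤ ⟨x − c·1, z⟩` for `z ∈ ∂U(x)`. -/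
lemma subgrad_inner {V E : Type*} [Fintype V] [Fintype E]
    (w : E → ℝ) (N : E → (V → ℝ) → ℝ) (hw : ∀ e, 0 ≤ w e)
    (hNsmul : ∀ e (a : ℝ) (y : V → ℝ), N e (a • y) = |a| * N e y)
    (x z : V → ℝ) (hz : z ∈ subdiff (hU w N) x) (c : ℝ) :
    2 * hU w N x ≤ ∑ i, (x i - c) * z i := by
  have hU0 : 0 ≤ hU w N x := hU_nonneg w N hw x
  have key : ∀ ε : ℝ, 0 < ε → ε < 1 →
      (2 - ε) * hU w N x ≤ ∑ i, (x i - c) * z i := by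
    intro ε h0 h1
    have h := hz (fun i => x i - ε * (x i - c))
    have hL : ∑ i, ((x i - ε * (x i - c)) - x i) * z i
        = -(ε * ∑ i, (x i - c) * z i) := by
      rw [Finset.mul_sum, ← Finset.sum_neg_distrib]
      apply Finset.sum_congr rfl; intro i _; ring
    have hR : hU w N (fun i => x i - ε * (x i - c)) = (1 - ε) ^ 2 * hU w N x := by
      have s1 : (fun i => x i - ε * (x i - c))
          = (fun i => (1 - ε) * (x i - c) + c) := by funext i; ring
      have s2 := hU_shift w N (fun i => (1 - ε) * (x i - c)) c
      have s3 := hU_smul w N hNsmul (fun i => x i - c)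
        (show (0 : ℝ) < 1 - ε by linarith)
      have s4 := hU_shift w N x (-c)
      have s5 : (fun i => x i - c) = (fun i => x i + -c) := by funext i; ring
      rw [s1, s2, s3, s5, s4]
    rw [hL, hR] at h
    nlinarith [h, h0, hU0]
  rcases eq_or_lt_of_le hU0 with h | h
  · have hk := key (1 / 2) (by norm_num) (by norm_num)
    rw [← h] at hk ⊢
    linarith
  · by_contra hcon
    push_neg at hcon
    have h32 := key (1 / 2) (by norm_num) (by norm_num)
    set S := ∑ i, (x i - c) * z i with hSdef
    have hd : (0 : ℝ) < 2 * hU w N x := by linarith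
    have hε0 : 0 < (2 * hU w N x - S) / (2 * hU w N x) :=
      div_pos (by linarith) hd
    have hε1 : (2 * hU w N x - S) / (2 * hU w N x) < 1 := by
      rw [div_lt_one hd]
      linarith
    have hk := key _ hε0 hε1
    have hεval : (2 * hU w N x - S) / (2 * hU w N x) * (2 * hU w N x)
        = 2 * hU w N x - S := div_mul_cancel₀ _ hd.ne'
    nlinarith [hk, hεval, hcon]

/-- along the discrete-time heat diffusion
`x_{t+1} = x_t − D⁻¹ L^D(x_t)`, the iterates satisfy
`‖x_t − π(x₀)‖_D² ≤ (1 − λ_G)^t ‖x₀ − π(x₀)‖_D²`, where `λ_G ∈ (0,1]` is the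
Poincaré constant of the hypergraph. -/
theorem stmt8 {V E : Type*} [Fintype V] [Fintype E] [DecidableEq V]
    (edge : E → Finset V) (w : E → ℝ) (N : E → (V → ℝ) → ℝ)
    (hw : ∀ e, 0 ≤ w e)
    (hN0 : ∀ e y, 0 ≤ N e y)
    (hNadd : ∀ e (y y' : V → ℝ), N e (y + y') ≤ N e y + N e y')
    (hNsmul : ∀ e (a : ℝ) (y : V → ℝ), N e (a • y) = |a| * N e y)
    (hNloc : ∀ e (y y' : V → ℝ), (∀ i ∈ edge e, y i = y' i) → N e y = N e y')
    (hNle : ∀ e (y : V → ℝ), N e y ≤ Real.sqrt (∑ i ∈ edge e, (y i) ^ 2))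
    (hdpos : ∀ i, 0 < hdeg edge w i)
    (lam : ℝ) (hlam0 : 0 < lam) (hlam1 : lam ≤ 1)
    (hPoin : ∀ y : V → ℝ, (∑ i, hdeg edge w i * y i = 0) →
      lam * ∑ i, hdeg edge w i * (y i) ^ 2 ≤ 2 * hU w N y)
    (x z : ℕ → V → ℝ)
    (hzmem : ∀ t, z t ∈ subdiff (hU w N) (x t))
    (hzmin : ∀ t, ∀ z' ∈ subdiff (hU w N) (x t),
      ∑ i, (z t i) ^ 2 / hdeg edge w i ≤ ∑ i, (z' i) ^ 2 / hdeg edge w i)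
    (hstep : ∀ t i, x (t + 1) i = x t i - z t i / hdeg edge w i) :
    ∀ t, ∑ i, hdeg edge w i *
        (x t i - (∑ j, hdeg edge w j * x 0 j) / (∑ j, hdeg edge w j)) ^ 2
      ≤ (1 - lam) ^ t * ∑ i, hdeg edge w i *
          (x 0 i - (∑ j, hdeg edge w j * x 0 j) / (∑ j, hdeg edge w j)) ^ 2 := by
  rcases isEmpty_or_nonempty V with hV | hV
  · intro t
    haveI := hV
    simp [Finset.univ_eq_empty]
  · set c : ℝ := (∑ j, hdeg edge w j * x 0 j) / (∑ j, hdeg edge w j) with hc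
    have hdsum : 0 < ∑ j, hdeg edge w j :=
      Finset.sum_pos (fun j _ => hdpos j) Finset.univ_nonempty
    have hzsum : ∀ t, ∑ i, z t i = 0 := fun t =>
      subgrad_sum_zero w N (x t) (z t) (hzmem t)
    have hcons : ∀ t, ∑ i, hdeg edge w i * x t i = ∑ i, hdeg edge w i * x 0 i := by
      intro t
      induction t with
      | zero => rfl
      | succ t ih =>
        have e1 : ∀ i ∈ (univ : Finset V),
            hdeg edge w i * x (t + 1) i = hdeg edge w i * x t i - z t i := by
          intro i _
          rw [hstep t i]
          field_simp [(hdpos i).ne']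
        rw [Finset.sum_congr rfl e1, Finset.sum_sub_distrib, hzsum t, ih]
        ring
    have hmean : ∀ t, ∑ i, hdeg edge w i * (x t i - c) = 0 := by
      intro t
      have e1 : ∑ i, hdeg edge w i * (x t i - c)
          = (∑ i, hdeg edge w i * x t i) - c * ∑ i, hdeg edge w i := by
        simp_rw [mul_sub]
        rw [Finset.sum_sub_distrib, Finset.mul_sum]
        congr 1
        apply Finset.sum_congr rfl; intro i _; ring
      rw [e1, hcons t, hc, div_mul_cancel₀ _ (ne_of_gt hdsum), sub_self]
    have honestep : ∀ t, ∑ i, hdeg edge w i * (x (t + 1) i - c) ^ 2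
        ≤ (1 - lam) * ∑ i, hdeg edge w i * (x t i - c) ^ 2 := by
      intro t
      obtain ⟨z', hz'm, hz'b⟩ := exists_good_subgrad edge w N hw hN0 hNadd hNsmul
        hNloc hNle hdpos (x t)
      have hz2 : ∑ i, (z t i) ^ 2 / hdeg edge w i ≤ 2 * hU w N (x t) :=
        le_trans (hzmin t z' hz'm) hz'b
      have hS : 2 * hU w N (x t) ≤ ∑ i, (x t i - c) * z t i :=
        subgrad_inner w N hw hNsmul (x t) (z t) (hzmem t) c
      have hpo : lam * ∑ i, hdeg edge w i * (x t i - c) ^ 2 ≤ 2 * hU w N (x t) := by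
        have h := hPoin (fun i => x t i - c) (hmean t)
        have hhU : hU w N (fun i => x t i - c) = hU w N (x t) := by
          rw [show (fun i => x t i - c) = (fun i => x t i + -c) from
            funext fun i => by ring]
          exact hU_shift w N (x t) (-c)
        rwa [hhU] at h
      have hexp : ∀ i ∈ (univ : Finset V),
          hdeg edge w i * (x (t + 1) i - c) ^ 2
            = hdeg edge w i * (x t i - c) ^ 2 - 2 * ((x t i - c) * z t i)
              + (z t i) ^ 2 / hdeg edge w i := by
        intro i _
        rw [hstep t i]
        have hdne : hdeg edge w i ≠ 0 := (hdpos i).ne'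
        field_simp
        ring
      rw [Finset.sum_congr rfl hexp, Finset.sum_add_distrib, Finset.sum_sub_distrib]
      have e2 : ∑ i, 2 * ((x t i - c) * z t i) = 2 * ∑ i, (x t i - c) * z t i :=
        (Finset.mul_sum _ _ _).symm
      rw [e2]
      linarith
    intro t
    induction t with
    | zero => simp
    | succ t ih =>
      calc ∑ i, hdeg edge w i * (x (t + 1) i - c) ^ 2
          ≤ (1 - lam) * ∑ i, hdeg edge w i * (x t i - c) ^ 2 := honestep t
        _ ≤ (1 - lam) * ((1 - lam) ^ t * ∑ i, hdeg edge w i * (x 0 i - c) ^ 2) :=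
            mul_le_mul_of_nonneg_left ih (by linarith)
        _ = (1 - lam) ^ (t + 1) * ∑ i, hdeg edge w i * (x 0 i - c) ^ 2 := by ring
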